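/- Let $g:C[0,T]\to\mathbb{R}$ be Fréchet differentiable at $R^{(n)}c$ with derivative the signed measure $\mu$, where $(R^{(n)}c)_t = e^{-n(T-t)}c_T + n\int_t^T e^{-n(s-t)}c_s\,ds$. Then $g^{(n)}(c) := g(R^{(n)}c)$ satisfies, as $\epsilon\to 0$, $g^{(n)}(c+\epsilon z) = g^{(n)}(c) + \epsilon\left(\int_0^T e^{-n(T-s)}\mu(ds)\right)z_T + \epsilon\int_0^T \left(\int_0^r e^{-n(r-s)}\mu(ds)\right) n\, z_r\,dr + o(\epsilon)$ for every $z\in C[0,T]$; hence $g^{(n)}\in\mathcal{A}_T$ with $\partial_{c_T}g^{(n)}(c) = \int_0^T e^{-n(T-s)}\mu(ds)$ and $\delta_r g^{(n)}(c) = n\int_0^r e^{-n(r-s)}\mu(ds)$. -/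

import Mathlib

open MeasureTheory Filter Set

/-- The sup norm `‖z‖ = sup_{s ∈ [0,T]} |z s|` of a path, as used on `C[0,T]`. -/
noncomputable def supNorm (T : ℝ) (z : ℝ → ℝ) : ℝ :=
  ⨆ s : Set.Icc (0:ℝ) T, |z s|

/-- A functional `h` on paths belongs to the class `𝒜_t` at `c`, with vertical part `dh`
(an atom at `t`) and absolutely continuous part `δh`, if its (Fréchet) derivative at `c`
has the form
`h(c+z) = h(c) + dh ⬝ z_t + ∫_0^t δh(s) z_s ds + o(‖z‖)` as `‖z‖ → 0`. -/
def MemClassA (T t : ℝ) (h : (ℝ → ℝ) → ℝ) (c : ℝ → ℝ) (dh : ℝ) (δh : ℝ → ℝ) : Prop :=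
  IntegrableOn δh (Set.Icc 0 t) volume ∧
  ∀ ε > (0:ℝ), ∃ δ > (0:ℝ), ∀ z : ℝ → ℝ, Continuous z →
    (∀ s ∈ Set.Icc (0:ℝ) T, |z s| ≤ δ) →
    |h (fun s => c s + z s) - h c - (dh * z t + ∫ s in (0:ℝ)..t, δh s * z s)|
      ≤ ε * supNorm T z

/-- The smoothing operator
`(R⁽ⁿ⁾c)_t = e^{-n(T-t)} c_T + n ∫_t^T e^{-n(s-t)} c_s ds`. -/
noncomputable def Rn (T : ℝ) (n : ℕ) (c : ℝ → ℝ) (t : ℝ) : ℝ :=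
  Real.exp (-(n : ℝ) * (T - t)) * c T
    + (n : ℝ) * ∫ s in t..T, Real.exp (-(n : ℝ) * (s - t)) * c s

/-- `g` is Fréchet differentiable at `c` (as a functional on `C[0,T]`) with derivative
the signed measure `μ = μp - μn` (Jordan decomposition into two finite measures):
`g(c+z) = g(c) + ∫_{[0,T]} z dμ + o(‖z‖)` as `‖z‖ → 0`. -/
def FrechetDerivAt (T : ℝ) (g : (ℝ → ℝ) → ℝ) (c : ℝ → ℝ)
    (μp μn : Measure ℝ) : Prop :=
  IsFiniteMeasure μp ∧ IsFiniteMeasure μn ∧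
  ∀ ε > (0:ℝ), ∃ δ > (0:ℝ), ∀ z : ℝ → ℝ, Continuous z →
    (∀ s ∈ Set.Icc (0:ℝ) T, |z s| ≤ δ) →
    |g (fun s => c s + z s) - g c
        - ((∫ s in Set.Icc (0:ℝ) T, z s ∂μp) - ∫ s in Set.Icc (0:ℝ) T, z s ∂μn)|
      ≤ ε * supNorm T z

/-!
`R⁽ⁿ⁾` is linear and maps paths bounded by `M` on `[0,T]` to paths bounded by `(1 + nT) M`, so
the Fréchet estimate for `g` at `R⁽ⁿ⁾c`, applied to the increment `R⁽ⁿ⁾z`, is an `o(‖z‖)`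
estimate for `g⁽ⁿ⁾` at `c` with derivative `z ↦ ∫ R⁽ⁿ⁾z dμ`. Fubini on the triangle
`{0 ≤ u ≤ s ≤ T}` rewrites this integral as an atom `(∫ e^{-n(T-u)} μ(du)) z_T` plus the density
`r ↦ n ∫_{[0,r]} e^{-n(r-u)} μ(du)` against `z_r dr`. Replacing `z` by `εz` gives the expansion.
-/

open Topology

lemma supNorm_nonneg (T : ℝ) (z : ℝ → ℝ) : 0 ≤ supNorm T z :=
  Real.iSup_nonneg fun _ => abs_nonneg _

lemma abs_le_supNorm {T : ℝ} {z : ℝ → ℝ} (hz : Continuous z) {s : ℝ} (hs : s ∈ Icc 0 T) :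
    |z s| ≤ supNorm T z := by
  have : CompactSpace (Icc (0:ℝ) T) := isCompact_iff_compactSpace.mp isCompact_Icc
  exact le_ciSup (isCompact_range (continuous_abs.comp (hz.comp continuous_subtype_val))).bddAbove
    (⟨s, hs⟩ : Icc (0:ℝ) T)

lemma supNorm_le {T : ℝ} (hT : 0 ≤ T) {z : ℝ → ℝ} {M : ℝ} (h : ∀ s ∈ Icc 0 T, |z s| ≤ M) :
    supNorm T z ≤ M :=
  have : Nonempty (Icc (0:ℝ) T) := (nonempty_Icc.mpr hT).to_subtype
  ciSup_le fun s => h s s.2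

lemma exp_neg_mul_sub_le_one (n : ℕ) {a b : ℝ} (hab : a ≤ b) : Real.exp (-(n : ℝ) * (b - a)) ≤ 1 :=
  Real.exp_le_one_iff.mpr (mul_nonpos_of_nonpos_of_nonneg (by simp) (sub_nonneg.mpr hab))

lemma Rn_add (T : ℝ) (n : ℕ) {a b : ℝ → ℝ} (ha : Continuous a) (hb : Continuous b) (u : ℝ) :
    Rn T n (fun s => a s + b s) u = Rn T n a u + Rn T n b u := by
  have hia : IntervalIntegrable (fun s => Real.exp (-(n : ℝ) * (s - u)) * a s) volume u T :=
    (by fun_prop : Continuous _).intervalIntegrable u T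
  have hib : IntervalIntegrable (fun s => Real.exp (-(n : ℝ) * (s - u)) * b s) volume u T :=
    (by fun_prop : Continuous _).intervalIntegrable u T
  simp only [Rn, mul_add, intervalIntegral.integral_add hia hib]
  ring

lemma continuous_integral_exp_mul (T : ℝ) (n : ℕ) {z : ℝ → ℝ} (hz : Continuous z) :
    Continuous fun u => ∫ s in u..T, Real.exp (-(n : ℝ) * (s - u)) * z s := by
  have : ∀ u, ∫ s in u..T, Real.exp (-(n : ℝ) * (s - u)) * z s
      = -∫ s in T..u, Real.exp (-(n : ℝ) * (s - u)) * z s := fun u =>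
    intervalIntegral.integral_symm _ _
  simp only [this]
  fun_prop

lemma continuous_Rn (T : ℝ) (n : ℕ) {z : ℝ → ℝ} (hz : Continuous z) : Continuous (Rn T n z) :=
  have := continuous_integral_exp_mul T n hz
  by unfold Rn; fun_prop

lemma abs_Rn_le {T : ℝ} (n : ℕ) {z : ℝ → ℝ} {M : ℝ} (hz : ∀ s ∈ Icc 0 T, |z s| ≤ M) {u : ℝ}
    (hu : u ∈ Icc 0 T) : |Rn T n z u| ≤ (1 + n * T) * M := by
  have hweighted : ∀ {s}, s ∈ Icc u T → |Real.exp (-(n : ℝ) * (s - u)) * z s| ≤ M := fun hs => by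
    rw [abs_mul, Real.abs_exp]
    exact (mul_le_mul (exp_neg_mul_sub_le_one n hs.1) (hz _ ⟨hu.1.trans hs.1, hs.2⟩)
      (abs_nonneg _) zero_le_one).trans_eq (one_mul M)
  have hM : 0 ≤ M := (abs_nonneg _).trans (hweighted ⟨hu.2, le_rfl⟩)
  have hint : |∫ s in u..T, Real.exp (-(n : ℝ) * (s - u)) * z s| ≤ M * T := by
    calc _ ≤ M * |T - u| := by
          rw [← Real.norm_eq_abs]
          refine intervalIntegral.norm_integral_le_of_norm_le_const fun s hs => ?_
          rw [uIoc_of_le hu.2] at hs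
          exact hweighted ⟨hs.1.le, hs.2⟩
      _ ≤ M * T := by rw [abs_of_nonneg (sub_nonneg.mpr hu.2)]; nlinarith [hu.1]
  calc |Rn T n z u| ≤ M + n * (M * T) := by
        refine (abs_add_le _ _).trans (add_le_add ?_ ?_)
        · simpa using hweighted ⟨hu.2, le_rfl⟩
        · rw [abs_mul, Nat.abs_cast]
          exact mul_le_mul_of_nonneg_left hint (Nat.cast_nonneg n)
    _ = (1 + n * T) * M := by ring

theorem setIntegral_intervalIntegral_swap (μ : Measure ℝ) [IsFiniteMeasure μ] {K : ℝ → ℝ → ℝ}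
    (hK : Continuous K.uncurry) {T : ℝ} (hT : 0 ≤ T) :
    ∫ u in Icc 0 T, (∫ s in u..T, K u s) ∂μ = ∫ s in 0..T, ∫ u in Icc 0 s, K u s ∂μ := by
  set F : ℝ → ℝ → ℝ := fun u s => if u ≤ s then K u s else 0
  have hF : Integrable F.uncurry ((μ.restrict (Icc 0 T)).prod (volume.restrict (Icc 0 T))) := by
    have : F.uncurry = {p : ℝ × ℝ | p.1 ≤ p.2}.indicator K.uncurry := by
      ext ⟨u, s⟩; simp [F, indicator_apply]
    rw [Measure.prod_restrict, this]
    exact (hK.continuousOn.integrableOn_compact (isCompact_Icc.prod isCompact_Icc)).indicator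
      (measurableSet_le measurable_fst measurable_snd)
  have hinner_volume : ∀ u ∈ Icc 0 T, ∫ s in Icc 0 T, F u s = ∫ s in u..T, K u s := by
    intro u hu
    have : F u = (Ici u).indicator (K u) := by ext s; simp [F, indicator_apply]
    rw [this, setIntegral_indicator measurableSet_Ici,
      show Icc 0 T ∩ Ici u = Icc u T by ext; simp only [mem_inter_iff, mem_Icc, mem_Ici]; grind,
      integral_Icc_eq_integral_Ioc, intervalIntegral.integral_of_le hu.2]
  have hinner_μ : ∀ s ∈ Icc 0 T, ∫ u in Icc 0 T, F u s ∂μ = ∫ u in Icc 0 s, K u s ∂μ := by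
    intro s hs
    have : (fun u => F u s) = (Iic s).indicator (fun u => K u s) := by
      ext u; simp [F, indicator_apply]
    rw [this, setIntegral_indicator measurableSet_Iic,
      show Icc 0 T ∩ Iic s = Icc 0 s by ext; simp only [mem_inter_iff, mem_Icc, mem_Iic]; grind]
  rw [← setIntegral_congr_fun measurableSet_Icc hinner_volume, integral_integral_swap hF,
    setIntegral_congr_fun measurableSet_Icc hinner_μ, integral_Icc_eq_integral_Ioc,
    intervalIntegral.integral_of_le hT]

theorem setIntegral_Rn (μ : Measure ℝ) [IsFiniteMeasure μ] {T : ℝ} (hT : 0 ≤ T) (n : ℕ)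
    {z : ℝ → ℝ} (hz : Continuous z) :
    ∫ u in Icc 0 T, Rn T n z u ∂μ
      = (∫ u in Icc 0 T, Real.exp (-(n : ℝ) * (T - u)) ∂μ) * z T
        + ∫ r in 0..T, (n * ∫ u in Icc 0 r, Real.exp (-(n : ℝ) * (r - u)) ∂μ) * z r := by
  have hend : IntegrableOn (fun u => Real.exp (-(n : ℝ) * (T - u)) * z T) (Icc 0 T) μ :=
    (by fun_prop : Continuous _).integrableOn_Icc
  have hmid : IntegrableOn (fun u => n * ∫ s in u..T, Real.exp (-(n : ℝ) * (s - u)) * z s)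
      (Icc 0 T) μ :=
    ((continuous_integral_exp_mul T n hz).const_mul _).integrableOn_Icc
  have hswap := setIntegral_intervalIntegral_swap μ
    (K := fun u s => Real.exp (-(n : ℝ) * (s - u)) * z s) (by fun_prop) hT
  simp only [integral_mul_const] at hswap
  simp only [Rn]
  rw [integral_add hend hmid, integral_mul_const, integral_const_mul, hswap,
    ← intervalIntegral.integral_const_mul]
  simp only [mul_assoc]

lemma integrableOn_setIntegral_exp (μ : Measure ℝ) [IsFiniteMeasure μ] (n : ℕ) (T : ℝ) :
    IntegrableOn (fun r => ∫ u in Icc 0 r, Real.exp (-(n : ℝ) * (r - u)) ∂μ) (Icc 0 T) := by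
  have hmeas : StronglyMeasurable fun r => ∫ u in Icc 0 r, Real.exp (-(n : ℝ) * (r - u)) ∂μ := by
    simp only [← integral_indicator measurableSet_Icc]
    refine StronglyMeasurable.integral_prod_right (f := fun r u =>
      (Icc 0 r).indicator (fun u => Real.exp (-(n : ℝ) * (r - u))) u) ?_
    have : (fun r u => (Icc 0 r).indicator (fun u => Real.exp (-(n : ℝ) * (r - u))) u).uncurry
        = {p : ℝ × ℝ | 0 ≤ p.2 ∧ p.2 ≤ p.1}.indicator
          (fun p => Real.exp (-(n : ℝ) * (p.1 - p.2))) := by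
      ext ⟨r, u⟩; simp [indicator_apply]
    rw [this]
    exact (by fun_prop : Continuous _).stronglyMeasurable.indicator
      ((measurableSet_le measurable_const measurable_snd).inter
        (measurableSet_le measurable_snd measurable_fst))
  refine IntegrableOn.of_bound measure_Icc_lt_top hmeas.aestronglyMeasurable (μ.real univ)
    (ae_of_all _ fun r => ?_)
  calc _ ≤ 1 * μ.real (Icc 0 r) := norm_setIntegral_le_of_norm_le_const (measure_lt_top _ _)
        fun u hu => by rw [Real.norm_eq_abs, Real.abs_exp]; exact exp_neg_mul_sub_le_one n hu.2
    _ ≤ μ.real univ := by rw [one_mul]; exact measureReal_mono (subset_univ _)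

theorem setIntegral_Rn_sub (μp μn : Measure ℝ) [IsFiniteMeasure μp] [IsFiniteMeasure μn] {T : ℝ}
    (hT : 0 ≤ T) (n : ℕ) {z : ℝ → ℝ} (hz : Continuous z) :
    (∫ u in Icc 0 T, Rn T n z u ∂μp) - ∫ u in Icc 0 T, Rn T n z u ∂μn
      = ((∫ u in Icc 0 T, Real.exp (-(n : ℝ) * (T - u)) ∂μp)
          - ∫ u in Icc 0 T, Real.exp (-(n : ℝ) * (T - u)) ∂μn) * z T
        + ∫ r in 0..T, n * ((∫ u in Icc 0 r, Real.exp (-(n : ℝ) * (r - u)) ∂μp)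
          - ∫ u in Icc 0 r, Real.exp (-(n : ℝ) * (r - u)) ∂μn) * z r := by
  have hint : ∀ (μ : Measure ℝ) [IsFiniteMeasure μ], IntervalIntegrable
      (fun r => (n * ∫ u in Icc 0 r, Real.exp (-(n : ℝ) * (r - u)) ∂μ) * z r) volume 0 T :=
    fun μ _ => (intervalIntegrable_iff_integrableOn_Icc_of_le hT).mpr <|
      IntegrableOn.mul_continuousOn ((integrableOn_setIntegral_exp μ n T).const_mul _)
        hz.continuousOn isCompact_Icc
  rw [setIntegral_Rn μp hT n hz, setIntegral_Rn μn hT n hz, add_sub_add_comm, ← sub_mul,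
    ← intervalIntegral.integral_sub (hint μp) (hint μn)]
  congr 1
  exact intervalIntegral.integral_congr fun r _ => by ring

theorem FrechetDerivAt.memClassA_comp {T t C : ℝ} (hT : 0 ≤ T) (hC : 0 < C)
    {g : (ℝ → ℝ) → ℝ} {R : (ℝ → ℝ) → ℝ → ℝ} {c : ℝ → ℝ} {μp μn : Measure ℝ} {dh : ℝ}
    {δh : ℝ → ℝ} (hfr : FrechetDerivAt T g (R c) μp μn)
    (hR_add : ∀ z, Continuous z → (R fun s => c s + z s) = fun s => R c s + R z s)
    (hR_cont : ∀ z, Continuous z → Continuous (R z))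
    (hR_bound : ∀ z M, (∀ s ∈ Icc 0 T, |z s| ≤ M) → ∀ s ∈ Icc 0 T, |R z s| ≤ C * M)
    (hR_deriv : ∀ z, Continuous z → (∫ s in Icc 0 T, R z s ∂μp) - ∫ s in Icc 0 T, R z s ∂μn
      = dh * z t + ∫ s in 0..t, δh s * z s)
    (hδh : IntegrableOn δh (Icc 0 t)) :
    MemClassA T t (fun x => g (R x)) c dh δh := by
  refine ⟨hδh, fun ε hε => ?_⟩
  obtain ⟨δ, hδ, hg⟩ := hfr.2.2 (ε / C) (div_pos hε hC)
  refine ⟨δ / C, div_pos hδ hC, fun z hz hzδ => ?_⟩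
  have hRz_small : ∀ s ∈ Icc 0 T, |R z s| ≤ δ := fun s hs =>
    (hR_bound z _ hzδ s hs).trans_eq (mul_div_cancel₀ δ hC.ne')
  have hRz_norm : supNorm T (R z) ≤ C * supNorm T z :=
    supNorm_le hT (hR_bound z _ fun s hs => abs_le_supNorm hz hs)
  calc _ = |g (fun s => R c s + R z s) - g (R c)
        - ((∫ s in Icc 0 T, R z s ∂μp) - ∫ s in Icc 0 T, R z s ∂μn)| := by
        dsimp only; rw [hR_add z hz, hR_deriv z hz]
    _ ≤ ε / C * supNorm T (R z) := hg (R z) (hR_cont z hz) hRz_small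
    _ ≤ ε / C * (C * supNorm T z) := by gcongr
    _ = ε * supNorm T z := by field_simp

theorem MemClassA.tendsto_directional {T t : ℝ} (hT : 0 ≤ T) {h : (ℝ → ℝ) → ℝ} {c : ℝ → ℝ}
    {dh : ℝ} {δh : ℝ → ℝ} (hA : MemClassA T t h c dh δh) {z : ℝ → ℝ} (hz : Continuous z) :
    Tendsto (fun ε : ℝ => (h (fun s => c s + ε * z s) - h c
      - ε * (dh * z t + ∫ s in 0..t, δh s * z s)) / ε) (𝓝[≠] 0) (𝓝 0) := by
  rw [Metric.tendsto_nhdsWithin_nhds]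
  intro η hη
  set M := supNorm T z
  have hM : 0 ≤ M := supNorm_nonneg T z
  obtain ⟨δ, hδ, hh⟩ := hA.2 (η / (M + 1)) (by positivity)
  refine ⟨δ / (M + 1), by positivity, fun ε hεne hε => ?_⟩
  rw [dist_zero_right, Real.norm_eq_abs] at hε ⊢
  have hε0 : 0 < |ε| := abs_pos.mpr hεne
  have hεz : ∀ s ∈ Icc 0 T, |ε * z s| ≤ |ε| * M := fun s hs => by
    rw [abs_mul]; exact mul_le_mul_of_nonneg_left (abs_le_supNorm hz hs) hε0.le
  have hεz_small : ∀ s ∈ Icc 0 T, |ε * z s| ≤ δ := fun s hs =>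
    calc |ε * z s| ≤ |ε| * M := hεz s hs
      _ ≤ δ / (M + 1) * (M + 1) := by gcongr; linarith
      _ = δ := div_mul_cancel₀ δ (by positivity)
  have hlin : dh * (ε * z t) + ∫ s in 0..t, δh s * (ε * z s)
      = ε * (dh * z t + ∫ s in 0..t, δh s * z s) := by
    rw [mul_add, ← intervalIntegral.integral_const_mul]
    congr 1 <;> [ring; exact intervalIntegral.integral_congr fun s _ => by ring]
  have hbound := hh (fun s => ε * z s) (continuous_const.mul hz) hεz_small
  rw [hlin] at hbound
  rw [abs_div, div_lt_iff₀ hε0]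
  calc _ ≤ η / (M + 1) * supNorm T (fun s => ε * z s) := hbound
    _ ≤ η / (M + 1) * (|ε| * M) := by gcongr; exact supNorm_le hT hεz
    _ < η * |ε| := by
        rw [div_mul_eq_mul_div, div_lt_iff₀ (by positivity)]
        nlinarith [mul_pos hη hε0]

/-- If `g` is Fréchet differentiable at `R⁽ⁿ⁾c` with derivative the
signed measure `μ = μp - μn`, then `g⁽ⁿ⁾(c) := g(R⁽ⁿ⁾c)` satisfies, as `ε → 0`, the
expansion
`g⁽ⁿ⁾(c+εz) = g⁽ⁿ⁾(c) + ε (∫ e^{-n(T-s)} μ(ds)) z_T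
  + ε ∫_0^T (n ∫_{[0,r]} e^{-n(r-s)} μ(ds)) z_r dr + o(ε)`
for every continuous `z`; hence `g⁽ⁿ⁾ ∈ 𝒜_T` with
`∂_{c_T} g⁽ⁿ⁾(c) = ∫ e^{-n(T-s)} μ(ds)` and `δ_r g⁽ⁿ⁾(c) = n ∫_0^r e^{-n(r-s)} μ(ds)`. -/
theorem Rn_pullback_classA_expansion
    (T : ℝ) (hT : 0 < T) (g : (ℝ → ℝ) → ℝ) (n : ℕ) (c : ℝ → ℝ) (hc : Continuous c)
    (μp μn : Measure ℝ)
    (hfr : FrechetDerivAt T g (fun u => Rn T n c u) μp μn) :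
    letI A : ℝ := (∫ s in Set.Icc (0:ℝ) T, Real.exp (-(n : ℝ) * (T - s)) ∂μp) - (∫ s in Set.Icc (0:ℝ) T, Real.exp (-(n : ℝ) * (T - s)) ∂μn)
    letI B : ℝ → ℝ := fun r => (n : ℝ) * ((∫ s in Set.Icc (0:ℝ) r, Real.exp (-(n : ℝ) * (r - s)) ∂μp) - (∫ s in Set.Icc (0:ℝ) r, Real.exp (-(n : ℝ) * (r - s)) ∂μn))
    (∀ z : ℝ → ℝ, Continuous z →
      Filter.Tendsto
        (fun ε : ℝ =>
          ((g fun u => Rn T n (fun s => c s + ε * z s) u) - (g fun u => Rn T n c u)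
            - ε * (A * z T + ∫ r in (0:ℝ)..T, B r * z r)) / ε)
        (nhdsWithin 0 {(0:ℝ)}ᶜ) (nhds 0))
    ∧ MemClassA T T (fun x => g fun u => Rn T n x u) c A B := by
  have : IsFiniteMeasure μp := hfr.1
  have : IsFiniteMeasure μn := hfr.2.1
  refine (fun hA => ⟨fun z hz => hA.tendsto_directional hT.le hz, hA⟩) ?_
  exact hfr.memClassA_comp hT.le (by positivity : (0 : ℝ) < 1 + n * T)
    (fun z hz => funext (Rn_add T n hc hz)) (fun z hz => continuous_Rn T n hz)
    (fun z M hz s hs => abs_Rn_le n hz hs) (fun z hz => setIntegral_Rn_sub μp μn hT.le n hz)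
    (((integrableOn_setIntegral_exp μp n T).sub (integrableOn_setIntegral_exp μn n T)).const_mul _)
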